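/- Let G = ⟨(12)(34), (13)(24)⟩ ≅ C₂ × C₂ act on k[x₁,x₂,x₃,x₄] over k of characteristic 2 by permuting variables, and let I = Tr^G(k[x₁,x₂,x₃,x₄]) ⊂ k[x₁,...,x₄]^G. Then N = x₁x₂x₃x₄ is a non-zerodivisor on the quotient ring k[x₁,...,x₄]^G / I. -/

import Mathlib

/-!
The monomial `N = x₁x₂x₃x₄` is fixed by every permutation of the variables, so truncated division
by `N` (discard the monomials not divisible by `N`, divide the others) commutes with the
permutation action and hence with the transfer. Thus `N * u = Tr^G(f)` forces `u = Tr^G(f / N)`.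
-/

open MvPolynomial

/-- The Klein four group `C₂ × C₂`. -/
abbrev K4 := Multiplicative (ZMod 2 × ZMod 2)

/-- The first generator `σ₁` of the Klein four group. -/
def s1 : K4 := Multiplicative.ofAdd (1, 0)

/-- The second generator `σ₂` of the Klein four group. -/
def s2 : K4 := Multiplicative.ofAdd (0, 1)

/-- The permutation `(12)(34)` of the four variables. -/
def e1 : Equiv.Perm (Fin 4) := Equiv.swap 0 1 * Equiv.swap 2 3

/-- The permutation `(13)(24)` of the four variables. -/
def e2 : Equiv.Perm (Fin 4) := Equiv.swap 0 2 * Equiv.swap 1 3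

/-- The permutation action of the Klein four group on the four variables. -/
def permOf (g : K4) : Equiv.Perm (Fin 4) :=
  e1 ^ (Multiplicative.toAdd g).1.val * e2 ^ (Multiplicative.toAdd g).2.val

/-- The ring of `H`-invariants in `R`. -/
def invSub (G R : Type) [Group G] [CommRing R] [MulSemiringAction G R]
    (H : Subgroup G) : Subring R where
  carrier := {f : R | ∀ h : H, (h : G) • f = f}
  mul_mem' := fun ha hb h => by rw [smul_mul', ha h, hb h]
  one_mem' := fun h => smul_one _
  add_mem' := fun ha hb h => by rw [smul_add, ha h, hb h]
  zero_mem' := fun h => smul_zero _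
  neg_mem' := fun ha h => by rw [smul_neg, (ha h : _)]

/-- The transfer ideal `I = Tr^G(k[V])·k[V]^G`, where `Tr^G(f) = Σ_{g∈G} g·f`. -/
noncomputable def transferIdealTriv (G R : Type) [Group G] [Fintype G] [CommRing R]
    [MulSemiringAction G R] : Ideal (invSub G R ⊤) :=
  Ideal.span {y | ∃ f : R, (y : R) = ∑ g : G, g • f}

namespace MvPolynomial

variable {σ R : Type*} [CommSemiring R]

theorem sum_divMonomial {ι : Type*} (t : Finset ι) (p : ι → MvPolynomial σ R) (s : σ →₀ ℕ) :
    (∑ i ∈ t, p i).divMonomial s = ∑ i ∈ t, (p i).divMonomial s := by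
  ext d
  simp only [coeff_divMonomial, coeff_sum]

theorem rename_divMonomial_of_mapDomain_eq {e : Equiv.Perm σ} {s : σ →₀ ℕ}
    (hs : s.mapDomain e = s) (p : MvPolynomial σ R) :
    (rename e p).divMonomial s = rename e (p.divMonomial s) := by
  ext d
  obtain ⟨d, rfl⟩ : ∃ d', d'.mapDomain e = d :=
    ⟨d.mapDomain e.symm, by simp [← Finsupp.mapDomain_comp]⟩
  rw [coeff_divMonomial, coeff_rename_mapDomain _ e.injective, ← hs,
    ← Finsupp.mapDomain_add, coeff_rename_mapDomain _ e.injective, coeff_divMonomial, hs]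

theorem mapDomain_sum_single_one [Fintype σ] (e : Equiv.Perm σ) :
    (∑ i, Finsupp.single i 1 : σ →₀ ℕ).mapDomain e = ∑ i, Finsupp.single i 1 := by
  rw [Finsupp.mapDomain_finsetSum]
  simp only [Finsupp.mapDomain_single]
  exact Equiv.sum_comp e fun i => Finsupp.single i 1

end MvPolynomial

section Transfer

variable {G R : Type} [Group G] [Fintype G] [CommRing R] [MulSemiringAction G R]

theorem mem_transferIdealTriv_iff {y : invSub G R ⊤} :
    y ∈ transferIdealTriv G R ↔ ∃ f : R, (y : R) = ∑ g : G, g • f := by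
  refine ⟨fun hy => ?_, fun hy => Ideal.subset_span hy⟩
  induction hy using Submodule.span_induction with
  | mem y hy => exact hy
  | zero => exact ⟨0, by simp⟩
  | add a b _ _ ha hb =>
    obtain ⟨f, hf⟩ := ha
    obtain ⟨f', hf'⟩ := hb
    exact ⟨f + f', by simp [hf, hf', Finset.sum_add_distrib]⟩
  | smul c y _ hy =>
    obtain ⟨f, hf⟩ := hy
    refine ⟨c * f, ?_⟩
    simp only [smul_eq_mul, Subring.coe_mul, hf, Finset.mul_sum, smul_mul',
      c.2 ⟨_, Subgroup.mem_top _⟩]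

end Transfer

section PermutationAction

variable {σ R G : Type} [CommRing R] [Group G]
  [MulSemiringAction G (MvPolynomial σ R)] {ρ : G → Equiv.Perm σ}
  (hact : ∀ (g : G) (f : MvPolynomial σ R), g • f = rename (ρ g) f)
  {s : σ →₀ ℕ} (hs : ∀ g, s.mapDomain (ρ g) = s)
include hact hs

theorem monomial_mem_invSub : monomial s (1 : R) ∈ invSub G (MvPolynomial σ R) ⊤ :=
  fun g => by rw [hact, rename_monomial, hs]

variable [Fintype G]

theorem transfer_divMonomial (f : MvPolynomial σ R) :
    (∑ g : G, g • f).divMonomial s = ∑ g : G, g • f.divMonomial s := by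
  simp only [hact, sum_divMonomial, rename_divMonomial_of_mapDomain_eq (hs _)]

theorem mk_mem_nonZeroDivisors_of_coe_eq_monomial {y : invSub G (MvPolynomial σ R) ⊤}
    (hy : (y : MvPolynomial σ R) = monomial s 1) :
    Ideal.Quotient.mk (transferIdealTriv G (MvPolynomial σ R)) y ∈ nonZeroDivisors _ := by
  rw [mem_nonZeroDivisors_iff_right]
  intro x hx
  obtain ⟨u, rfl⟩ := Ideal.Quotient.mk_surjective x
  rw [← map_mul, Ideal.Quotient.eq_zero_iff_mem, mem_transferIdealTriv_iff] at hx
  obtain ⟨f, hf⟩ := hx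
  rw [Ideal.Quotient.eq_zero_iff_mem, mem_transferIdealTriv_iff]
  refine ⟨f.divMonomial s, ?_⟩
  rw [← transfer_divMonomial hact hs, ← hf, Subring.coe_mul, hy, mul_comm,
    divMonomial_monomial_mul]

end PermutationAction

theorem klein_regular_N_nonzerodivisor_general
    (k : Type) [Field k]
    [MulSemiringAction K4 (MvPolynomial (Fin 4) k)]
    (hact : ∀ (g : K4) (f : MvPolynomial (Fin 4) k), g • f = rename (permOf g) f) :
    ∃ y : invSub K4 (MvPolynomial (Fin 4) k) ⊤,
      (y : MvPolynomial (Fin 4) k) = X 0 * X 1 * X 2 * X 3 ∧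
      Ideal.Quotient.mk (transferIdealTriv K4 (MvPolynomial (Fin 4) k)) y ∈
        nonZeroDivisors ((invSub K4 (MvPolynomial (Fin 4) k) ⊤) ⧸
          transferIdealTriv K4 (MvPolynomial (Fin 4) k)) := by
  have hN : (X 0 * X 1 * X 2 * X 3 : MvPolynomial (Fin 4) k) =
      monomial (∑ i, Finsupp.single i 1) 1 := by
    simp only [monomial_sum_one, Fin.prod_univ_four, X]
  have hs : ∀ g : K4, (∑ i, Finsupp.single i 1).mapDomain (permOf g) = ∑ i, Finsupp.single i 1 :=
    fun g => mapDomain_sum_single_one _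
  exact ⟨⟨_, monomial_mem_invSub hact hs⟩, hN.symm,
    mk_mem_nonZeroDivisors_of_coe_eq_monomial hact hs rfl⟩

/-- for the Klein four group permuting the variables of
`k[x₁,x₂,x₃,x₄]` (characteristic 2) via `(12)(34)` and `(13)(24)`, the invariant
`N = x₁x₂x₃x₄` is a non-zerodivisor on `k[x₁,…,x₄]^G / I`, where
`I = Tr^G(k[x₁,…,x₄])` is the transfer ideal. -/
theorem klein_regular_N_nonzerodivisor
    (k : Type) [Field k] [CharP k 2]
    [MulSemiringAction K4 (MvPolynomial (Fin 4) k)]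
    [SMulCommClass K4 k (MvPolynomial (Fin 4) k)]
    (hact : ∀ (g : K4) (f : MvPolynomial (Fin 4) k), g • f = rename (permOf g) f) :
    ∃ y : invSub K4 (MvPolynomial (Fin 4) k) ⊤,
      (y : MvPolynomial (Fin 4) k) = X 0 * X 1 * X 2 * X 3 ∧
      Ideal.Quotient.mk (transferIdealTriv K4 (MvPolynomial (Fin 4) k)) y ∈
        nonZeroDivisors ((invSub K4 (MvPolynomial (Fin 4) k) ⊤) ⧸
          transferIdealTriv K4 (MvPolynomial (Fin 4) k)) :=
  klein_regular_N_nonzerodivisor_general k hact
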